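/- arXiv:1111.1780 — 2 statements merged into one kernel-verified Lean document; each statement's English description precedes it below -/
import Mathlib

section
/- Let C be the set of extreme points of Δ'. Then T = {s ∈ ℝ^k_+ : a·s ≥ 1 for all a ∈ C}. -/
open Matrix Pointwise

noncomputable section

/-- A point of `ℝ^m` is an integer point if all its coordinates are integers. -/
def IsIntPoint {m : ℕ} (x : Fin m → ℝ) : Prop := ∀ i, ∃ z : ℤ, x i = (z : ℝ)

/-- A set is lattice-free if its interior contains no integer point. -/
def IsLatticeFree {m : ℕ} (S : Set (Fin m → ℝ)) : Prop :=
  ∀ x ∈ interior S, ¬ IsIntPoint x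

/-- `M(B) = {x ∈ ℝ^m | bⁱ · (x - f) ≤ 1 for all rows bⁱ of B}`. -/
def Mset {n m : ℕ} (f : Fin m → ℝ) (B : Matrix (Fin n) (Fin m) ℝ) :
    Set (Fin m → ℝ) :=
  {x | ∀ i, B i ⬝ᵥ (x - f) ≤ 1}

/-- `ψ_B(r) = max_i bⁱ · r` (the Minkowski functional of `M(B)`). -/
def psi {n m : ℕ} (B : Matrix (Fin n) (Fin m) ℝ) (r : Fin m → ℝ) : ℝ :=
  ⨆ i, B i ⬝ᵥ r

/-- `γ(B) = (ψ_B(r^1), …, ψ_B(r^k))`. -/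
def gammaVec {n k : ℕ} (r : Fin k → Fin 2 → ℝ) (B : Matrix (Fin n) (Fin 2) ℝ) :
    Fin k → ℝ :=
  fun j => psi B (r j)

/-- The nonnegative orthant `ℝ^k_+`. -/
def orthant (k : ℕ) : Set (Fin k → ℝ) := {x | ∀ i, 0 ≤ x i}

/-- `Δ = {γ(B) | B ∈ ℝ^{3×2}, M(B) lattice-free}`. -/
def Delta {k : ℕ} (f : Fin 2 → ℝ) (r : Fin k → Fin 2 → ℝ) : Set (Fin k → ℝ) :=
  {g | ∃ B : Matrix (Fin 3) (Fin 2) ℝ, IsLatticeFree (Mset f B) ∧ g = gammaVec r B}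

/-- `Δ' = cl(conv Δ) + ℝ^k_+` (Minkowski sum). -/
def Delta' {k : ℕ} (f : Fin 2 → ℝ) (r : Fin k → Fin 2 → ℝ) : Set (Fin k → ℝ) :=
  closure (convexHull ℝ (Delta f r)) + orthant k

/-- The triangle closure `T = {s ∈ ℝ^k_+ | γ · s ≥ 1 for all γ ∈ Δ}`. -/
def Tset {k : ℕ} (f : Fin 2 → ℝ) (r : Fin k → Fin 2 → ℝ) : Set (Fin k → ℝ) :=
  {s | s ∈ orthant k ∧ ∀ g ∈ Delta f r, 1 ≤ g ⬝ᵥ s}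

/-- `x` is an extreme point of `K`: `x ∈ K` and `x` is not the midpoint of two
points of `K` both different from `x`. -/
def IsExtremePt {E : Type*} [AddCommGroup E] [Module ℝ E] (K : Set E) (x : E) : Prop :=
  x ∈ K ∧ ¬ ∃ y₁ ∈ K, ∃ y₂ ∈ K, y₁ ≠ x ∧ y₂ ≠ x ∧ x = (2⁻¹ : ℝ) • (y₁ + y₂)

/-- A vector is rational if all its coordinates are rational. -/
def IsRatVec {m : ℕ} (x : Fin m → ℝ) : Prop := ∀ i, ∃ q : ℚ, x i = (q : ℝ)

/-- A maximal lattice-free convex set. -/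
def IsMaxLatticeFree {m : ℕ} (S : Set (Fin m → ℝ)) : Prop :=
  Convex ℝ S ∧ IsLatticeFree S ∧
    ∀ S' : Set (Fin m → ℝ), Convex ℝ S' → IsLatticeFree S' → S ⊆ S' → S' = S


lemma dot_sub_continuous {m : ℕ} (v f : Fin m → ℝ) :
    Continuous (fun x : Fin m → ℝ => v ⬝ᵥ (x - f)) := by
  simp only [dotProduct]
  exact continuous_finset_sum _ fun j _ =>
    continuous_const.mul ((continuous_apply j).sub continuous_const)

lemma dot_left_continuous {m : ℕ} (v : Fin m → ℝ) :
    Continuous (fun x : Fin m → ℝ => x ⬝ᵥ v) := by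
  simp only [dotProduct]
  exact continuous_finset_sum _ fun j _ => (continuous_apply j).mul continuous_const

lemma psi_nonneg {f : Fin 2 → ℝ} {B : Matrix (Fin 3) (Fin 2) ℝ}
    (h : IsLatticeFree (Mset f B)) (r : Fin 2 → ℝ) : 0 ≤ psi B r := by
  by_contra hneg
  push_neg at hneg
  set p := psi B r with hp
  have hBr : ∀ i, B i ⬝ᵥ r ≤ p := by
    intro i
    rw [hp]
    simp only [psi]
    exact le_ciSup (f := fun i => B i ⬝ᵥ r) (Set.Finite.bddAbove (Set.finite_range _)) i
  set S : ℝ := ∑ i : Fin 3, ∑ j : Fin 2, |B i j| with hS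
  have hSnn : 0 ≤ S :=
    Finset.sum_nonneg fun i _ => Finset.sum_nonneg fun j _ => abs_nonneg _
  set t : ℝ := (1 + S) / (-p) with ht
  have htpos : 0 < t := div_pos (by linarith) (by linarith)
  set c : Fin 2 → ℝ := f + t • r with hc
  set z : Fin 2 → ℝ := fun j => ((round (c j) : ℤ) : ℝ) with hz
  have hint : IsIntPoint z := fun j => ⟨round (c j), rfl⟩
  have htp : t * p = -(1 + S) := by
    have hne : (-p) ≠ 0 := by linarith
    have h' : t * (-p) = 1 + S := div_mul_cancel₀ _ hne
    linarith [h']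
  have hzU : ∀ i, B i ⬝ᵥ (z - f) < 1 := by
    intro i
    have hzf : z - f = (z - c) + t • r := by rw [hc]; abel
    have h1 : B i ⬝ᵥ (z - f) = B i ⬝ᵥ (z - c) + t * (B i ⬝ᵥ r) := by
      rw [hzf, dotProduct_add, dotProduct_smul, smul_eq_mul]
    have hb1 : ∀ j, |(z - c) j| ≤ 1 := by
      intro j
      have : (z - c) j = -(c j - round (c j)) := by
        simp [hz, Pi.sub_apply]
      rw [this, abs_neg]
      calc |c j - round (c j)| ≤ 1 / 2 := abs_sub_round (c j)
        _ ≤ 1 := by norm_num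
    have h2 : B i ⬝ᵥ (z - c) ≤ S := by
      calc B i ⬝ᵥ (z - c) ≤ |B i ⬝ᵥ (z - c)| := le_abs_self _
        _ ≤ ∑ j : Fin 2, |B i j * (z - c) j| := Finset.abs_sum_le_sum_abs _ _
        _ ≤ ∑ j : Fin 2, |B i j| := Finset.sum_le_sum fun j _ => by
            rw [abs_mul]
            exact mul_le_of_le_one_right (abs_nonneg _) (hb1 j)
        _ ≤ S := Finset.single_le_sum
            (f := fun i => ∑ j : Fin 2, |B i j|)
            (fun i _ => Finset.sum_nonneg fun j _ => abs_nonneg _) (Finset.mem_univ i)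
    have h3 : t * (B i ⬝ᵥ r) ≤ t * p := by
      exact mul_le_mul_of_nonneg_left (hBr i) (le_of_lt htpos)
    rw [h1]
    calc B i ⬝ᵥ (z - c) + t * (B i ⬝ᵥ r) ≤ S + t * p := by linarith
      _ = -1 := by rw [htp]; ring
      _ < 1 := by norm_num
  have hUopen : IsOpen {x : Fin 2 → ℝ | ∀ i, B i ⬝ᵥ (x - f) < 1} := by
    have heq : {x : Fin 2 → ℝ | ∀ i, B i ⬝ᵥ (x - f) < 1}
        = ⋂ i, (fun x : Fin 2 → ℝ => B i ⬝ᵥ (x - f)) ⁻¹' Set.Iio 1 := by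
      ext x; simp [Set.mem_iInter]
    rw [heq]
    exact isOpen_iInter_of_finite fun i =>
      (isOpen_Iio).preimage (dot_sub_continuous _ _)
  have hsub : {x : Fin 2 → ℝ | ∀ i, B i ⬝ᵥ (x - f) < 1} ⊆ Mset f B :=
    fun x hx i => le_of_lt (hx i)
  exact h z (interior_maximal hsub hUopen hzU) hint

lemma orthant_closed (k : ℕ) : IsClosed (orthant k) := by
  have heq : orthant k = ⋂ i, (fun x : Fin k → ℝ => x i) ⁻¹' Set.Ici 0 := by
    ext x; simp [orthant, Set.mem_iInter]
  rw [heq]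
  exact isClosed_iInter fun i => isClosed_Ici.preimage (continuous_apply i)

lemma orthant_convex (k : ℕ) : Convex ℝ (orthant k) := by
  intro x hx y hy a b ha hb _ i
  have : (a • x + b • y) i = a * x i + b * y i := rfl
  rw [this]
  exact add_nonneg (mul_nonneg ha (hx i)) (mul_nonneg hb (hy i))

lemma delta_subset_orthant {k : ℕ} (f : Fin 2 → ℝ) (r : Fin k → Fin 2 → ℝ) :
    Delta f r ⊆ orthant k := by
  rintro g ⟨B, hB, rfl⟩ j
  exact psi_nonneg hB (r j)

lemma dcl_subset_orthant {k : ℕ} (f : Fin 2 → ℝ) (r : Fin k → Fin 2 → ℝ) :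
    closure (convexHull ℝ (Delta f r)) ⊆ orthant k :=
  closure_minimal (convexHull_min (delta_subset_orthant f r) (orthant_convex k))
    (orthant_closed k)

/-- `T = {s ∈ ℝ^k_+ | a·s ≥ 1 for every extreme point a of Δ'}`. -/
theorem stmt4 (k : ℕ) (hk : 1 ≤ k) (f : Fin 2 → ℝ) (hf : ¬ IsIntPoint f)
    (r : Fin k → Fin 2 → ℝ) :
    Tset f r =
      {s | s ∈ orthant k ∧ ∀ a : Fin k → ℝ, IsExtremePt (Delta' f r) a → 1 ≤ a ⬝ᵥ s} := by
  set D := closure (convexHull ℝ (Delta f r)) with hD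
  have hDorth : D ⊆ orthant k := dcl_subset_orthant f r
  have hDconv : Convex ℝ D := (convex_convexHull ℝ _).closure
  have hDclosed : IsClosed D := isClosed_closure
  ext s
  simp only [Set.mem_setOf_eq, Tset]
  constructor
  · rintro ⟨hs0, hs1⟩
    refine ⟨hs0, ?_⟩
    intro a ha
    obtain ⟨haD', -⟩ := ha
    obtain ⟨d, hd, p, hp, rfl⟩ := Set.mem_add.mp haD'
    have hHconv : Convex ℝ {x : Fin k → ℝ | 1 ≤ x ⬝ᵥ s} := by
      refine convex_halfSpace_ge ⟨fun x y => add_dotProduct x y s, fun c x => ?_⟩ 1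
      exact smul_dotProduct c x s
    have hHclosed : IsClosed {x : Fin k → ℝ | 1 ≤ x ⬝ᵥ s} := by
      have : {x : Fin k → ℝ | 1 ≤ x ⬝ᵥ s} = (fun x : Fin k → ℝ => x ⬝ᵥ s) ⁻¹' Set.Ici 1 := rfl
      rw [this]
      exact isClosed_Ici.preimage (dot_left_continuous s)
    have hd1 : 1 ≤ d ⬝ᵥ s :=
      closure_minimal (convexHull_min (fun g hg => hs1 g hg) hHconv) hHclosed hd
    have hp0 : 0 ≤ p ⬝ᵥ s :=
      Finset.sum_nonneg fun j _ => mul_nonneg (hp j) (hs0 j)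
    rw [add_dotProduct]
    linarith
  · rintro ⟨hs0, hs2⟩
    refine ⟨hs0, ?_⟩
    intro g hg
    have hgD : g ∈ D := subset_closure (subset_convexHull ℝ _ hg)
    have hgnn : ∀ i, 0 ≤ g i := fun i => delta_subset_orthant f r hg i
    set cg : ℝ := ∑ i, g i with hcg
    have hcg0 : 0 ≤ cg := Finset.sum_nonneg fun i _ => hgnn i
    -- Key step: for every ε > 0, 1 ≤ g ⬝ᵥ s + ε * cg
    have key : ∀ ε : ℝ, 0 < ε → 1 ≤ g ⬝ᵥ s + ε * cg := by
      intro ε hε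
      set φ : Fin k → ℝ := fun i => s i + ε with hφ
      have hφpos : ∀ i, 0 < φ i := fun i => by
        have := hs0 i; simp only [hφ]; linarith
      have hdotφ_nonneg : ∀ x : Fin k → ℝ, (∀ i, 0 ≤ x i) → 0 ≤ x ⬝ᵥ φ := by
        intro x hx
        exact Finset.sum_nonneg fun j _ => mul_nonneg (hx j) (le_of_lt (hφpos j))
      have hsingle : ∀ (x : Fin k → ℝ), (∀ i, 0 ≤ x i) → ∀ i, ε * x i ≤ x ⬝ᵥ φ := by
        intro x hx i
        have h1 : x i * ε ≤ x i * φ i := by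
          have := hs0 i
          exact mul_le_mul_of_nonneg_left (by simp only [hφ]; linarith) (hx i)
        have h2 : x i * φ i ≤ x ⬝ᵥ φ :=
          Finset.single_le_sum (f := fun j => x j * φ j)
            (fun j _ => mul_nonneg (hx j) (le_of_lt (hφpos j))) (Finset.mem_univ i)
        linarith
      set M : ℝ := (g ⬝ᵥ φ) / ε + 1 with hM
      have hgφ0 : 0 ≤ g ⬝ᵥ φ := hdotφ_nonneg g hgnn
      have hM1 : 1 ≤ M := by
        have : 0 ≤ (g ⬝ᵥ φ) / ε := div_nonneg hgφ0 (le_of_lt hε)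
        simp only [hM]; linarith
      have hboundg : ∀ i, g i ≤ M - 1 := by
        intro i
        have := hsingle g hgnn i
        have : g i ≤ (g ⬝ᵥ φ) / ε := by
          rw [le_div_iff₀ hε]; linarith [hsingle g hgnn i]
        simp only [hM]; linarith
      set K := D ∩ {x : Fin k → ℝ | ∀ i, x i ≤ M} with hK
      have hboxclosed : IsClosed {x : Fin k → ℝ | ∀ i, x i ≤ M} := by
        have heq : {x : Fin k → ℝ | ∀ i, x i ≤ M}
            = ⋂ i, (fun x : Fin k → ℝ => x i) ⁻¹' Set.Iic M := by
          ext x; simp [Set.mem_iInter]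
        rw [heq]
        exact isClosed_iInter fun i => isClosed_Iic.preimage (continuous_apply i)
      have hboxconv : Convex ℝ {x : Fin k → ℝ | ∀ i, x i ≤ M} := by
        intro x hx y hy a b ha hb hab i
        have hxy : (a • x + b • y) i = a * x i + b * y i := rfl
        rw [hxy]
        calc a * x i + b * y i ≤ a * M + b * M := by
              exact add_le_add (mul_le_mul_of_nonneg_left (hx i) ha)
                (mul_le_mul_of_nonneg_left (hy i) hb)
          _ = M := by rw [← add_mul, hab, one_mul]
      have hKclosed : IsClosed K := hDclosed.inter hboxclosed
      have hKconv : Convex ℝ K := hDconv.inter hboxconv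
      have hKsub : K ⊆ Metric.closedBall (0 : Fin k → ℝ) M := by
        intro x hx
        rw [Metric.mem_closedBall, dist_zero_right]
        refine (pi_norm_le_iff_of_nonneg (by linarith)).mpr fun i => ?_
        rw [Real.norm_eq_abs, abs_le]
        exact ⟨by linarith [hDorth hx.1 i], hx.2 i⟩
      have hKcomp : IsCompact K :=
        (isCompact_closedBall (0 : Fin k → ℝ) M).of_isClosed_subset hKclosed hKsub
      have hgK : g ∈ K := ⟨hgD, fun i => by linarith [hboundg i]⟩
      obtain ⟨a₀, ha₀K, hmin₀⟩ := hKcomp.exists_isMinOn ⟨g, hgK⟩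
        (dot_left_continuous φ).continuousOn
      have hmin : ∀ y ∈ K, a₀ ⬝ᵥ φ ≤ y ⬝ᵥ φ := fun y hy => hmin₀ hy
      set F := {x ∈ K | x ⬝ᵥ φ ≤ a₀ ⬝ᵥ φ} with hF
      have hFclosed : IsClosed F := by
        refine hKclosed.inter ?_
        exact isClosed_le (dot_left_continuous φ) continuous_const
      have hFsub : F ⊆ K := fun x hx => hx.1
      have hFcomp : IsCompact F := hKcomp.of_isClosed_subset hFclosed hFsub
      obtain ⟨a, haext⟩ := hFcomp.extremePoints_nonempty ⟨a₀, ha₀K, le_rfl⟩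
      rw [mem_extremePoints] at haext
      obtain ⟨haF, hext⟩ := haext
      have haK : a ∈ K := haF.1
      have haD : a ∈ D := haK.1
      have hann : ∀ i, 0 ≤ a i := fun i => hDorth haD i
      have hamin : ∀ y ∈ K, a ⬝ᵥ φ ≤ y ⬝ᵥ φ := fun y hy => le_trans haF.2 (hmin y hy)
      have haφg : a ⬝ᵥ φ ≤ g ⬝ᵥ φ := hamin g hgK
      have haM : ∀ i, a i ≤ M - 1 := by
        intro i
        have h1 := hsingle a hann i
        have : a i ≤ (g ⬝ᵥ φ) / ε := by rw [le_div_iff₀ hε]; linarith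
        simp only [hM]; linarith
      -- a is an extreme point of Δ'
      have hextreme : IsExtremePt (Delta' f r) a := by
        constructor
        · exact Set.mem_add.mpr ⟨a, haD, 0, fun i => le_rfl, add_zero a⟩
        · rintro ⟨y, hy, z, hz, hyne, hzne, hmid⟩
          obtain ⟨d₁, hd₁, p₁, hp₁, rfl⟩ := Set.mem_add.mp hy
          obtain ⟨d₂, hd₂, p₂, hp₂, rfl⟩ := Set.mem_add.mp hz
          set q : Fin k → ℝ := (2⁻¹ : ℝ) • (p₁ + p₂) with hq
          set mm : Fin k → ℝ := (2⁻¹ : ℝ) • (d₁ + d₂) with hmm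
          have hmD : mm ∈ D := by
            have := hDconv hd₁ hd₂ (by norm_num : (0:ℝ) ≤ 2⁻¹)
              (by norm_num : (0:ℝ) ≤ 2⁻¹) (by norm_num)
            simpa [hmm, smul_add] using this
          have ham : a = mm + q := by
            rw [hmid, hq, hmm]; module
          have hqnn : ∀ i, 0 ≤ q i := by
            intro i
            have : q i = 2⁻¹ * (p₁ i + p₂ i) := rfl
            rw [this]
            have := hp₁ i; have := hp₂ i
            positivity
          have hmK : mm ∈ K := by
            refine ⟨hmD, fun i => ?_⟩
            have h1 : a i = mm i + q i := by rw [ham]; rfl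
            have := hqnn i
            have := haM i
            linarith
          have hqφ : q ⬝ᵥ φ ≤ 0 := by
            have h1 := hamin mm hmK
            have h2 : a ⬝ᵥ φ = mm ⬝ᵥ φ + q ⬝ᵥ φ := by rw [ham, add_dotProduct]
            linarith
          have hq0 : ∀ i, q i = 0 := by
            have hsum : ∑ i, q i * φ i = 0 := by
              have h1 : 0 ≤ ∑ i, q i * φ i :=
                Finset.sum_nonneg fun j _ => mul_nonneg (hqnn j) (le_of_lt (hφpos j))
              have h2 : q ⬝ᵥ φ = ∑ i, q i * φ i := rfl
              linarith [hqφ]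
            intro i
            have hall := (Finset.sum_eq_zero_iff_of_nonneg
              (fun j (_ : j ∈ Finset.univ) => mul_nonneg (hqnn j) (le_of_lt (hφpos j)))).mp
              hsum i (Finset.mem_univ i)
            have := hφpos i
            rcases mul_eq_zero.mp hall with h | h
            · exact h
            · linarith
          have hp₁0 : p₁ = 0 := by
            funext i
            have h := hq0 i
            have : q i = 2⁻¹ * (p₁ i + p₂ i) := rfl
            rw [this] at h
            have := hp₁ i; have := hp₂ i
            simp only [Pi.zero_apply]
            linarith
          have hp₂0 : p₂ = 0 := by
            funext i
            have h := hq0 i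
            have : q i = 2⁻¹ * (p₁ i + p₂ i) := rfl
            rw [this] at h
            have := hp₁ i; have := hp₂ i
            simp only [Pi.zero_apply]
            linarith
          -- now y = d₁, z = d₂ ∈ D
          set Y := d₁ + p₁ with hY
          set Z := d₂ + p₂ with hZ
          have hYD : Y ∈ D := by rw [hY, hp₁0, add_zero]; exact hd₁
          have hZD : Z ∈ D := by rw [hZ, hp₂0, add_zero]; exact hd₂
          have hYZ : Y + Z = a + a := by
            rw [hmid]; module
          have hZeq : Z = a + a - Y := by rw [← hYZ]; abel
          set N : ℝ := ‖Y - a‖ with hN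
          have hN0 : 0 ≤ N := norm_nonneg _
          set tt : ℝ := (N + 1)⁻¹ with htt
          have httpos : 0 < tt := by positivity
          have htt1 : tt ≤ 1 := by
            rw [htt]
            rw [inv_le_one_iff₀]
            right; linarith
          have habs : ∀ i, |Y i - a i| ≤ N := by
            intro i
            have h1 := norm_le_pi_norm (Y - a) i
            simpa [Real.norm_eq_abs] using h1
          have httN : tt * N ≤ 1 := by
            rw [htt, inv_mul_le_iff₀ (by linarith)]
            linarith
          set y' : Fin k → ℝ := a + tt • (Y - a) with hy'
          set z' : Fin k → ℝ := a - tt • (Y - a) with hz'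
          have hy'D : y' ∈ D := by
            have heq : y' = (1 - tt) • a + tt • Y := by rw [hy']; module
            rw [heq]
            exact hDconv haD hYD (by linarith) (le_of_lt httpos) (by ring)
          have hz'D : z' ∈ D := by
            have heq : z' = (1 - tt) • a + tt • Z := by
              rw [hz', hZeq]; module
            rw [heq]
            exact hDconv haD hZD (by linarith) (le_of_lt httpos) (by ring)
          have hy'K : y' ∈ K := by
            refine ⟨hy'D, fun i => ?_⟩
            have h1 : y' i = a i + tt * (Y i - a i) := rfl
            have h2 : tt * (Y i - a i) ≤ tt * N := by
              calc tt * (Y i - a i) ≤ tt * |Y i - a i| := by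
                    exact mul_le_mul_of_nonneg_left (le_abs_self _) (le_of_lt httpos)
                _ ≤ tt * N := mul_le_mul_of_nonneg_left (habs i) (le_of_lt httpos)
            have := haM i
            rw [h1]; linarith
          have hz'K : z' ∈ K := by
            refine ⟨hz'D, fun i => ?_⟩
            have h1 : z' i = a i - tt * (Y i - a i) := rfl
            have h2 : -(tt * (Y i - a i)) ≤ tt * N := by
              calc -(tt * (Y i - a i)) = tt * (a i - Y i) := by ring
                _ ≤ tt * |Y i - a i| := by
                    refine mul_le_mul_of_nonneg_left ?_ (le_of_lt httpos)
                    rw [abs_sub_comm]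
                    exact le_abs_self _
                _ ≤ tt * N := mul_le_mul_of_nonneg_left (habs i) (le_of_lt httpos)
            have := haM i
            rw [h1]; linarith
          have hsumy'z' : y' + z' = a + a := by rw [hy', hz']; module
          have hdotsum : y' ⬝ᵥ φ + z' ⬝ᵥ φ = a ⬝ᵥ φ + a ⬝ᵥ φ := by
            rw [← add_dotProduct, ← add_dotProduct, hsumy'z']
          have hy'F : y' ∈ F := by
            refine ⟨hy'K, ?_⟩
            have h1 := hamin z' hz'K
            have h2 := haF.2
            linarith
          have hz'F : z' ∈ F := by
            refine ⟨hz'K, ?_⟩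
            have h1 := hamin y' hy'K
            have h2 := haF.2
            linarith
          have hseg : a ∈ openSegment ℝ y' z' := by
            refine ⟨2⁻¹, 2⁻¹, by norm_num, by norm_num, by norm_num, ?_⟩
            rw [hy', hz']; module
          obtain ⟨hcon, -⟩ := hext y' hy'F z' hz'F hseg
          have hYa : Y ≠ a := hyne
          have hne0 : tt • (Y - a) ≠ 0 :=
            smul_ne_zero (ne_of_gt httpos) (sub_ne_zero.mpr hYa)
          apply hne0
          have : y' - a = tt • (Y - a) := by rw [hy']; abel
          rw [← this, hcon, sub_self]
      have h1a : 1 ≤ a ⬝ᵥ s := hs2 a hextreme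
      have hasφ : a ⬝ᵥ s ≤ a ⬝ᵥ φ := by
        refine Finset.sum_le_sum fun i _ => ?_
        exact mul_le_mul_of_nonneg_left (by simp only [hφ]; linarith) (hann i)
      have hgφeq : g ⬝ᵥ φ = g ⬝ᵥ s + ε * cg := by
        simp only [dotProduct, hφ, hcg, mul_add, Finset.sum_add_distrib, Finset.mul_sum]
        congr 1
        exact Finset.sum_congr rfl fun i _ => mul_comm _ _
      linarith
    -- conclude by letting ε → 0
    by_contra hcon
    push_neg at hcon
    have hδ : 0 < (1 - g ⬝ᵥ s) / (2 * (cg + 1)) :=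
      div_pos (by linarith) (by linarith)
    have h1 := key _ hδ
    have h2 : (1 - g ⬝ᵥ s) / (2 * (cg + 1)) * cg ≤ (1 - g ⬝ᵥ s) / 2 := by
      rw [div_mul_eq_mul_div, div_le_div_iff₀ (by linarith) (by norm_num)]
      nlinarith
    linarith
end
end

section
/- Let m, n ≥ 1, f ∈ ℝ^m, and let B ∈ ℝ^{n×m} with rows b^1, …, b^n be such that M(B) is a bounded lattice-free set. Let Ā ∈ ℝ^{n×m} with rows ā^1, …, ā^n be such that for every integer point y ∈ M(B) ∩ ℤ^m there exists an index i with b^i·(y−f) = 1 and ā^i·(y−f) = 0. Then there exists δ > 0 such that for all 0 < ε < δ, both M(B + εĀ) and M(B − εĀ) are lattice-free. -/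
open Matrix Pointwise

noncomputable section

/-!
Boundedness of `M(B)` gives `c > 0` with `ψ_B(r) ≥ c‖r‖` (compactness of the unit sphere), while
every `x ∈ M(B + tĀ)` satisfies `ψ_B(x - f) ≤ 1 + |t|‖Ā‖‖x - f‖`; so for small `|t|` all the sets
`M(B + tĀ)` lie in one ball around `f`, which contains only finitely many integer points. An
integer point outside `M(B)` violates some inequality strictly and stays outside for small `|t|`;
one inside `M(B)` lies on a facet `i` with `āⁱ · (y - f) = 0`, which stays tight for every `t`.
Hence each of the finitely many candidates is eventually outside the interior of `M(B + tĀ)`.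
-/

open Filter Topology Metric

section Mset

variable {n m : ℕ} {f : Fin m → ℝ}

lemma add_smul_row_dotProduct (B A : Matrix (Fin n) (Fin m) ℝ) (t : ℝ) (i : Fin n)
    (v : Fin m → ℝ) : (B + t • A) i ⬝ᵥ v = B i ⬝ᵥ v + t * A i ⬝ᵥ v := by
  change (B i + t • A i) ⬝ᵥ v = _
  rw [add_dotProduct, smul_dotProduct, smul_eq_mul]

lemma dotProduct_sub_lt_one_of_mem_interior_Mset {C : Matrix (Fin n) (Fin m) ℝ}
    {x : Fin m → ℝ} (hx : x ∈ interior (Mset f C)) (i : Fin n) : C i ⬝ᵥ (x - f) < 1 := by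
  have hline : Tendsto (fun t : ℝ => x + t • C i) (𝓝[>] 0) (𝓝 x) := by
    simpa using ((Continuous.tendsto (f := fun t : ℝ => x + t • C i) (by fun_prop) 0)).mono_left
      nhdsWithin_le_nhds
  obtain ⟨t, htM, ht⟩ :=
    ((hline.eventually (mem_interior_iff_mem_nhds.1 hx)).and self_mem_nhdsWithin).exists
  have hstep : C i ⬝ᵥ (x - f) + t * C i ⬝ᵥ C i ≤ 1 := by
    have := htM i
    rwa [add_sub_right_comm, dotProduct_add, dotProduct_smul, smul_eq_mul] at this
  rcases eq_or_ne (C i) 0 with hC | hC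
  · simp [hC]
  · have : 0 < C i ⬝ᵥ C i :=
      lt_of_le_of_ne' (Finset.sum_nonneg fun j _ => mul_self_nonneg _)
        (dotProduct_self_eq_zero.not.2 hC)
    nlinarith [mul_pos (Set.mem_Ioi.1 ht) this]

end Mset

section psi

variable {n m : ℕ} (B : Matrix (Fin n) (Fin m) ℝ)

lemma dotProduct_le_psi (r : Fin m → ℝ) (i : Fin n) : B i ⬝ᵥ r ≤ psi B r :=
  le_ciSup (f := fun i => B i ⬝ᵥ r) (Set.finite_range _).bddAbove i

lemma psi_smul {t : ℝ} (ht : 0 ≤ t) (r : Fin m → ℝ) : psi B (t • r) = t * psi B r := by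
  simp only [psi, dotProduct_smul, smul_eq_mul, Real.mul_iSup_of_nonneg ht]

lemma psi_zero : psi B 0 = 0 := by
  simp [psi]

lemma lowerSemicontinuous_psi : LowerSemicontinuous (psi B) :=
  lowerSemicontinuous_ciSup (fun _ => (Set.finite_range _).bddAbove)
    fun _ => (continuous_const.dotProduct continuous_id).lowerSemicontinuous

variable {B}

lemma psi_pos_of_isBounded {f : Fin m → ℝ} (hB : Bornology.IsBounded (Mset f B))
    {r : Fin m → ℝ} (hr : r ≠ 0) : 0 < psi B r := by
  by_contra! hψ
  have hray : ∀ t : ℝ, 0 ≤ t → f + t • r ∈ Mset f B := fun t ht i => by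
    rw [add_sub_cancel_left, dotProduct_smul, smul_eq_mul]
    nlinarith [dotProduct_le_psi B r i]
  obtain ⟨R, hR⟩ := hB.subset_closedBall f
  have hr' : 0 < ‖r‖ := norm_pos_iff.2 hr
  have hfar := hR (hray ((|R| + 1) / ‖r‖) (by positivity))
  rw [mem_closedBall, dist_eq_norm, add_sub_cancel_left, norm_smul, Real.norm_eq_abs,
    abs_of_nonneg (by positivity), div_mul_cancel₀ _ hr'.ne'] at hfar
  linarith [le_abs_self R]

lemma exists_pos_mul_norm_le_psi {f : Fin m → ℝ} (hB : Bornology.IsBounded (Mset f B)) :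
    ∃ c > 0, ∀ r, c * ‖r‖ ≤ psi B r := by
  obtain ⟨c, hc, hcS⟩ : ∃ c > 0, ∀ u ∈ sphere (0 : Fin m → ℝ) 1, c ≤ psi B u := by
    rcases (sphere (0 : Fin m → ℝ) 1).eq_empty_or_nonempty with hS | hS
    · exact ⟨1, one_pos, by simp [hS]⟩
    · obtain ⟨u, hu, hmin⟩ :=
        ((lowerSemicontinuous_psi B).lowerSemicontinuousOn _).exists_isMinOn hS
          (isCompact_sphere 0 1)
      exact ⟨psi B u, psi_pos_of_isBounded hB (ne_zero_of_mem_unit_sphere ⟨u, hu⟩), hmin⟩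
  refine ⟨c, hc, fun r => ?_⟩
  rcases eq_or_ne r 0 with rfl | hr
  · simp [psi_zero]
  · have hr' : 0 < ‖r‖ := norm_pos_iff.2 hr
    have hu : ‖r‖⁻¹ • r ∈ sphere (0 : Fin m → ℝ) 1 := by
      simp [norm_smul, hr'.ne']
    calc c * ‖r‖ ≤ psi B (‖r‖⁻¹ • r) * ‖r‖ := by gcongr; exact hcS _ hu
      _ = psi B r := by rw [psi_smul B (by positivity)]; field_simp

end psi

section perturbation

attribute [local instance] Matrix.linftyOpSeminormedAddCommGroup

variable {n m : ℕ} {f : Fin m → ℝ} {B : Matrix (Fin n) (Fin m) ℝ}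

lemma abs_row_dotProduct_le (A : Matrix (Fin n) (Fin m) ℝ) (i : Fin n) (v : Fin m → ℝ) :
    |A i ⬝ᵥ v| ≤ ‖A‖ * ‖v‖ :=
  (norm_le_pi_norm (A *ᵥ v) i).trans (Matrix.linfty_opNorm_mulVec A v)

lemma exists_eventually_Mset_add_smul_subset_closedBall (hB : Bornology.IsBounded (Mset f B))
    (A : Matrix (Fin n) (Fin m) ℝ) :
    ∃ R, ∀ᶠ t in 𝓝 (0 : ℝ), Mset f (B + t • A) ⊆ closedBall f R := by
  obtain ⟨c, hc, hcψ⟩ := exists_pos_mul_norm_le_psi hB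
  have hsmall : ∀ᶠ t in 𝓝 (0 : ℝ), |t| * ‖A‖ < c / 2 :=
    (Continuous.tendsto (f := fun t : ℝ => |t| * ‖A‖) (by fun_prop) 0).eventually_lt_const
      (by simpa using half_pos hc)
  refine ⟨2 / c, hsmall.mono fun t ht x hx => ?_⟩
  have hψ : psi B (x - f) ≤ 1 + |t| * ‖A‖ * ‖x - f‖ := by
    refine Real.iSup_le (fun i => ?_) (by positivity)
    have hi := hx i
    rw [add_smul_row_dotProduct] at hi
    have hAi : |t * A i ⬝ᵥ (x - f)| ≤ |t| * (‖A‖ * ‖x - f‖) := by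
      rw [abs_mul]; gcongr; exact abs_row_dotProduct_le A i _
    linarith [neg_abs_le (t * A i ⬝ᵥ (x - f))]
  have := hcψ (x - f)
  rw [mem_closedBall, dist_eq_norm, le_div_iff₀ hc]
  nlinarith [norm_nonneg (x - f)]

end perturbation

lemma isIntPoint_iff_exists_intCast {m : ℕ} {x : Fin m → ℝ} :
    IsIntPoint x ↔ ∃ k : Fin m → ℤ, (fun i => (k i : ℝ)) = x := by
  simp only [IsIntPoint, Classical.skolem (p := fun i (z : ℤ) => x i = z), funext_iff, eq_comm]

lemma Bornology.IsBounded.finite_sep_isIntPoint {m : ℕ} {S : Set (Fin m → ℝ)}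
    (hS : Bornology.IsBounded S) : {x ∈ S | IsIntPoint x}.Finite := by
  have hcast : Tendsto (fun (k : Fin m → ℤ) i => (k i : ℝ)) Filter.cofinite (cocompact _) := by
    simpa only [coprodᵢ_cofinite, coprodᵢ_cocompact] using
      Tendsto.pi_map_coprodᵢ fun _ : Fin m => Int.tendsto_coe_cofinite
  have hfin : ((fun (k : Fin m → ℤ) i => (k i : ℝ)) ⁻¹' closure S).Finite := by
    simpa using mem_cofinite.1 (hcast hS.isCompact_closure.compl_mem_cocompact)
  refine (hfin.image fun k i => (k i : ℝ)).subset ?_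
  rintro x ⟨hxS, hx⟩
  obtain ⟨k, rfl⟩ := isIntPoint_iff_exists_intCast.1 hx
  exact ⟨k, subset_closure hxS, rfl⟩

section latticeFree

variable {n m : ℕ} {f : Fin m → ℝ} {B A : Matrix (Fin n) (Fin m) ℝ}

lemma eventually_notMem_interior_Mset_add_smul
    (hA : ∀ y ∈ Mset f B, IsIntPoint y → ∃ i, B i ⬝ᵥ (y - f) = 1 ∧ A i ⬝ᵥ (y - f) = 0)
    {y : Fin m → ℝ} (hy : IsIntPoint y) :
    ∀ᶠ t in 𝓝 (0 : ℝ), y ∉ interior (Mset f (B + t • A)) := by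
  suffices ∃ i, ∀ᶠ t in 𝓝 (0 : ℝ), 1 ≤ (B + t • A) i ⬝ᵥ (y - f) by
    obtain ⟨i, hi⟩ := this
    exact hi.mono fun t ht hyint =>
      (dotProduct_sub_lt_one_of_mem_interior_Mset hyint i).not_ge ht
  by_cases hyM : y ∈ Mset f B
  · obtain ⟨i, hB1, hA0⟩ := hA y hyM hy
    exact ⟨i, Eventually.of_forall fun t => by
      rw [add_smul_row_dotProduct, hB1, hA0, mul_zero, add_zero]⟩
  · obtain ⟨i, hi⟩ := not_forall.1 hyM
    have hcont : Tendsto (fun t : ℝ => (B + t • A) i ⬝ᵥ (y - f)) (𝓝 0)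
        (𝓝 (B i ⬝ᵥ (y - f))) := by
      simp_rw [add_smul_row_dotProduct]
      simpa using Continuous.tendsto (f := fun t : ℝ => B i ⬝ᵥ (y - f) + t * A i ⬝ᵥ (y - f))
        (by fun_prop) 0
    exact ⟨i, (hcont.eventually_const_lt (not_le.1 hi)).mono fun _ => le_of_lt⟩

theorem eventually_isLatticeFree_Mset_add_smul (hB : Bornology.IsBounded (Mset f B))
    (hA : ∀ y ∈ Mset f B, IsIntPoint y → ∃ i, B i ⬝ᵥ (y - f) = 1 ∧ A i ⬝ᵥ (y - f) = 0) :
    ∀ᶠ t in 𝓝 (0 : ℝ), IsLatticeFree (Mset f (B + t • A)) := by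
  obtain ⟨R, hR⟩ := exists_eventually_Mset_add_smul_subset_closedBall hB A
  have hpts : ∀ᶠ t in 𝓝 (0 : ℝ), ∀ y ∈ {x ∈ closedBall f R | IsIntPoint x},
      y ∉ interior (Mset f (B + t • A)) :=
    isBounded_closedBall.finite_sep_isIntPoint.eventually_all.2 fun _ hy =>
      eventually_notMem_interior_Mset_add_smul hA hy.2
  filter_upwards [hR, hpts] with t hsub hnot x hx hxint
  exact hnot x ⟨hsub (interior_subset hx), hxint⟩ hx

end latticeFree

theorem stmt8_general (m n : ℕ) (f : Fin m → ℝ)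
    (B A : Matrix (Fin n) (Fin m) ℝ)
    (hbdd : Bornology.IsBounded (Mset f B))
    (hA : ∀ y ∈ Mset f B, IsIntPoint y →
      ∃ i, B i ⬝ᵥ (y - f) = 1 ∧ A i ⬝ᵥ (y - f) = 0) :
    ∃ δ > (0 : ℝ), ∀ ε : ℝ, 0 < ε → ε < δ →
      IsLatticeFree (Mset f (B + ε • A)) ∧ IsLatticeFree (Mset f (B - ε • A)) := by
  obtain ⟨δ, hδ, hlf⟩ :=
    Metric.eventually_nhds_iff.1 (eventually_isLatticeFree_Mset_add_smul hbdd hA)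
  refine ⟨δ, hδ, fun ε hε hεδ => ⟨hlf ?_, ?_⟩⟩
  · simpa [abs_of_pos hε] using hεδ
  · rw [sub_eq_add_neg, ← neg_smul]
    exact hlf (by simpa [abs_of_pos hε] using hεδ)

/-- if `M(B)` is a bounded lattice-free set and every integer point of
`M(B)` lies on a facet whose row of `Ā` is orthogonal to it (relative to `f`),
then `M(B ± εĀ)` is lattice-free for all small enough `ε > 0`. -/
theorem stmt8 (m n : ℕ) (hm : 1 ≤ m) (hn : 1 ≤ n) (f : Fin m → ℝ)
    (B A : Matrix (Fin n) (Fin m) ℝ)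
    (hbdd : Bornology.IsBounded (Mset f B))
    (hlf : IsLatticeFree (Mset f B))
    (hA : ∀ y ∈ Mset f B, IsIntPoint y →
      ∃ i, B i ⬝ᵥ (y - f) = 1 ∧ A i ⬝ᵥ (y - f) = 0) :
    ∃ δ > (0 : ℝ), ∀ ε : ℝ, 0 < ε → ε < δ →
      IsLatticeFree (Mset f (B + ε • A)) ∧ IsLatticeFree (Mset f (B - ε • A)) :=
  stmt8_general m n f B A hbdd hA
end
end
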